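/- arXiv:1810.12862 — 2 statements merged into one kernel-verified Lean document; each statement's English description precedes it below -/
import Mathlib

section
/- Let P ⊆ ℝⁿ be a polyhedron with at least one extreme point, and let f : P → ℝ be a continuous function such that every level set of f is the intersection of P with an affine subspace (a flat). If f attains its maximum on P, then f attains its maximum at an extreme point of P. -/
/-!
The maximizers of `f` form an extreme subset (a face) of `P`: restricted to a segment of `P`,
`f` is continuous and each of its level sets is either at most a point or the whole segment,
so `f` is either injective on the segment, hence strictly monotone with no interior maximum,
or constant on it. The face is `P ∩ S` for a flat `S`, itself a polyhedron, and it contains no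
line because `P` has an extreme point; a point of `P ∩ S` whose set of active constraints is
maximal for inclusion is then an extreme point of `P ∩ S`, hence of `P`.
-/

open Set AffineMap

theorem ContinuousOn.not_injOn_Icc_of_isMaxOn {α δ : Type*}
    [ConditionallyCompleteLinearOrder α] [TopologicalSpace α] [OrderTopology α]
    [DenselyOrdered α] [LinearOrder δ] [TopologicalSpace δ] [OrderClosedTopology δ]
    {g : α → δ} {a b c : α}
    (hg : ContinuousOn g (Icc a b)) (hc : c ∈ Ioo a b) (hmax : IsMaxOn g (Icc a b) c) :
    ¬ InjOn g (Icc a b) := by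
  intro hinj
  have ha : a ∈ Icc a b := ⟨le_rfl, hc.1.le.trans hc.2.le⟩
  have hb : b ∈ Icc a b := ⟨hc.1.le.trans hc.2.le, le_rfl⟩
  have hc' : c ∈ Icc a b := Ioo_subset_Icc_self hc
  rcases hg.strictMonoOn_of_injOn_Icc' ha.2 hinj with hmono | hanti
  · exact (hmono hc' hb hc.2).not_ge (hmax hb)
  · exact (hanti ha hc' hc.1).not_ge (hmax ha)

section LevelSets

variable {E : Type*} [AddCommGroup E] [Module ℝ E]

def HasFlatLevelSets (P : Set E) (f : E → ℝ) : Prop :=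
  ∀ c : ℝ, ∃ S : AffineSubspace ℝ E, {x ∈ P | f x = c} = P ∩ S

theorem HasFlatLevelSets.apply_lineMap_eq {P : Set E} {f : E → ℝ} (hlev : HasFlatLevelSets P f)
    (hP : Convex ℝ P) {x y : E} (hx : x ∈ P) (hy : y ∈ P) {s t u : ℝ} (hs : s ∈ Icc 0 1)
    (ht : t ∈ Icc 0 1) (hu : u ∈ Icc 0 1) (hst : s ≠ t)
    (heq : f (lineMap x y s) = f (lineMap x y t)) :
    f (lineMap x y u) = f (lineMap x y s) := by
  obtain ⟨S, hS⟩ := hlev (f (lineMap x y s))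
  have hlevel : ∀ r ∈ Icc (0 : ℝ) 1,
      f (lineMap x y r) = f (lineMap x y s) ↔ lineMap x y r ∈ S := fun r hr => by
    simpa [hP.lineMap_mem hx hy hr] using Set.ext_iff.1 hS (lineMap x y r)
  have hsS := (hlevel s hs).1 rfl
  have htS := (hlevel t ht).1 heq.symm
  refine (hlevel u hu).2 (?_ : u ∈ S.comap (lineMap x y))
  have hu_eq : u = lineMap s t ((u - s) / (t - s)) := by
    rw [lineMap_apply_ring']
    field_simp [sub_ne_zero.2 hst.symm]
    ring
  rw [hu_eq]
  exact AffineMap.lineMap_mem _ hsS htS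

variable [TopologicalSpace E] [IsTopologicalAddGroup E] [ContinuousSMul ℝ E]

theorem HasFlatLevelSets.isExtreme_of_isMaxOn {P : Set E} {f : E → ℝ}
    (hlev : HasFlatLevelSets P f) (hP : Convex ℝ P) (hf : ContinuousOn f P) {x₀ : E}
    (hmax : IsMaxOn f P x₀) :
    IsExtreme ℝ P {x ∈ P | f x = f x₀} := by
  refine ⟨sep_subset _ _, fun x₁ hx₁ x₂ hx₂ x hx hseg => ?_⟩
  rw [openSegment_eq_image_lineMap] at hseg
  obtain ⟨β, hβ, rfl⟩ := hseg
  set g : ℝ → ℝ := fun t => f (lineMap x₁ x₂ t)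
  have hg : ContinuousOn g (Icc 0 1) :=
    hf.comp lineMap_continuous.continuousOn (hP.mapsTo_lineMap hx₁ hx₂)
  have hgmax : IsMaxOn g (Icc 0 1) β :=
    isMaxOn_iff.2 fun t ht =>
      (isMaxOn_iff.1 hmax _ (hP.lineMap_mem hx₁ hx₂ ht)).trans_eq hx.2.symm
  have hninj := hg.not_injOn_Icc_of_isMaxOn hβ hgmax
  rw [InjOn] at hninj
  push Not at hninj
  obtain ⟨s, hs, t, ht, hgst, hst⟩ := hninj
  have hconst : ∀ u ∈ Icc (0 : ℝ) 1, g u = g β := fun u hu =>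
    (hlev.apply_lineMap_eq hP hx₁ hx₂ hs ht hu hst hgst).trans
      (hlev.apply_lineMap_eq hP hx₁ hx₂ hs ht (Ioo_subset_Icc_self hβ) hst hgst).symm
  exact ⟨hx₁, by simpa [g, hx.2] using hconst 0 (left_mem_Icc.2 zero_le_one)⟩

end LevelSets

section Polyhedron

variable {E ι : Type*} [AddCommGroup E] [Module ℝ E]

def activeSet (A : E →ₗ[ℝ] ι → ℝ) (b : ι → ℝ) (x : E) : Set ι := {i | A x i = b i}

variable {A : E →ₗ[ℝ] ι → ℝ} {b : ι → ℝ}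

theorem activeSet_subset_of_mem_openSegment {x₁ x₂ v : E} (hx₁ : A x₁ ≤ b)
    (hx₂ : A x₂ ≤ b) (hv : v ∈ openSegment ℝ x₁ x₂) :
    activeSet A b v ⊆ activeSet A b x₁ := by
  obtain ⟨α, β, hα, hβ, hαβ, rfl⟩ := hv
  intro i hi
  simp only [activeSet, mem_ofPred_eq, map_add, map_smul, Pi.add_apply, Pi.smul_apply,
    smul_eq_mul] at hi ⊢
  refine le_antisymm (hx₁ i) (le_of_not_gt fun hlt => ?_)
  have hb : α * b i + β * b i = b i := by rw [← add_mul, hαβ, one_mul]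
  linarith [mul_lt_mul_of_pos_left hlt hα, mul_le_mul_of_nonneg_left (hx₂ i) hβ.le]

theorem ker_eq_bot_of_extremePoints_nonempty (h : (extremePoints ℝ {x | A x ≤ b}).Nonempty) :
    LinearMap.ker A = ⊥ := by
  obtain ⟨e, he⟩ := h
  refine LinearMap.ker_eq_bot'.2 fun d hd => ?_
  have hmem : ∀ t : ℝ, A (e + t • d) ≤ b := fun t => by simpa [hd] using he.1
  have hseg : e ∈ openSegment ℝ (e + (-1 : ℝ) • d) (e + (1 : ℝ) • d) :=
    ⟨1 / 2, 1 / 2, by norm_num, by norm_num, by norm_num, by module⟩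
  simpa using he.2 (hmem _) (hmem _) hseg

theorem exists_activeSet_ssubset [Finite ι] {S : AffineSubspace ℝ E} {v d : E}
    (hv : v ∈ {x | A x ≤ b} ∩ S) (hd : d ∈ S.direction)
    (hact : ∀ i ∈ activeSet A b v, A d i = 0) (hpos : ∃ i, 0 < A d i) :
    ∃ w ∈ {x | A x ≤ b} ∩ S, activeSet A b v ⊂ activeSet A b w := by
  -- walk from `v` along `d` until the first constraint increasing along `d` becomes active
  obtain ⟨i₀, hi₀, hmin⟩ := Set.exists_min_image {i | 0 < A d i}
    (fun i => (b i - A v i) / A d i) (Set.toFinite _) hpos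
  set t := (b i₀ - A v i₀) / A d i₀
  have ht : 0 ≤ t := div_nonneg (sub_nonneg.2 (hv.1 i₀)) hi₀.le
  have hAw : ∀ i, A (v + t • d) i = A v i + t * A d i := fun i => by simp
  refine ⟨v + t • d, ⟨fun i => ?_, ?_⟩, fun i hi => ?_, fun hsub => ?_⟩
  · rw [hAw]
    rcases le_or_gt (A d i) 0 with hi | hi
    · nlinarith [hv.1 i]
    · have := hmin i hi
      rw [le_div_iff₀ hi] at this
      linarith
  · simpa [add_comm] using
      AffineSubspace.vadd_mem_of_mem_direction (S.direction.smul_mem t hd) hv.2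
  · simpa [activeSet, hAw, hact i hi] using hi
  · have hi₀w : i₀ ∈ activeSet A b (v + t • d) := by
      simp only [activeSet, mem_ofPred_eq, hAw, t]
      rw [div_mul_cancel₀ _ hi₀.ne']
      ring
    exact hi₀.ne' (hact i₀ (hsub hi₀w))

theorem extremePoints_inter_affineSubspace_nonempty [Finite ι] (hA : LinearMap.ker A = ⊥)
    {S : AffineSubspace ℝ E} (hne : ({x | A x ≤ b} ∩ (S : Set E)).Nonempty) :
    (extremePoints ℝ ({x | A x ≤ b} ∩ (S : Set E))).Nonempty := by
  obtain ⟨v, hv, hmax⟩ :=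
    Set.Finite.exists_maximalFor' (activeSet A b) _ (Set.toFinite _) hne
  refine ⟨v, mem_extremePoints_iff_left.2 ⟨hv, fun x hx y hy hseg => ?_⟩⟩
  have hact : ∀ i ∈ activeSet A b v, A (x - v) i = 0 := fun i hi => by
    have hix := activeSet_subset_of_mem_openSegment hx.1 hy.1 hseg hi
    simp only [activeSet, mem_ofPred_eq] at hi hix
    simp [hi, hix]
  have hgrow : ∀ d ∈ S.direction, (∀ i ∈ activeSet A b v, A d i = 0) →
      (∃ i, 0 < A d i) → False := fun d hd hd0 hpos => by
    obtain ⟨w, hw, hvw⟩ := exists_activeSet_ssubset hv hd hd0 hpos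
    exact hvw.2 (hmax hw hvw.1)
  by_contra hxv
  obtain ⟨i, hi⟩ : ∃ i, A (x - v) i ≠ 0 := by
    by_contra! h
    exact hxv (sub_eq_zero.1 (LinearMap.ker_eq_bot'.1 hA _ (funext h)))
  have hdir : x - v ∈ S.direction := AffineSubspace.vsub_mem_direction hx.2 hv.2
  rcases hi.lt_or_gt with hneg | hpos
  · refine hgrow _ (S.direction.neg_mem hdir) (fun j hj => ?_) ⟨i, by simpa using hneg⟩
    rw [map_neg, Pi.neg_apply, hact j hj, neg_zero]
  · exact hgrow _ hdir hact ⟨i, hpos⟩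

end Polyhedron

/-- A continuous function on a polyhedron with at least one extreme
point, whose level sets are intersections of the polyhedron with affine subspaces,
attains its maximum (when attained at all) at an extreme point. -/
theorem maximizer_at_extreme_point {n : ℕ} (P : Set (Fin n → ℝ))
    (hpoly : ∃ (m : ℕ) (a : Fin m → Fin n → ℝ) (b : Fin m → ℝ),
      P = {x | ∀ i, ∑ j, a i j * x j ≤ b i})
    (hext : (Set.extremePoints ℝ P).Nonempty)
    (f : (Fin n → ℝ) → ℝ) (hf : ContinuousOn f P)
    (hlevel : ∀ c : ℝ, ∃ S : AffineSubspace ℝ (Fin n → ℝ),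
      {x ∈ P | f x = c} = P ∩ (S : Set (Fin n → ℝ)))
    (hmax : ∃ x ∈ P, ∀ y ∈ P, f y ≤ f x) :
    ∃ x ∈ Set.extremePoints ℝ P, ∀ y ∈ P, f y ≤ f x := by
  obtain ⟨m, a, b, hP⟩ := hpoly
  replace hP : P = {x | (Matrix.of a).mulVecLin x ≤ b} := hP
  obtain ⟨x₀, hx₀, hmax⟩ := hmax
  obtain ⟨S, hS⟩ := hlevel (f x₀)
  have hface : IsExtreme ℝ P {x ∈ P | f x = f x₀} :=
    HasFlatLevelSets.isExtreme_of_isMaxOn hlevel (hP ▸ (convex_Iic b).linear_preimage _) hf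
      (isMaxOn_iff.2 hmax)
  have hx₀S : x₀ ∈ P ∩ S := hS ▸ ⟨hx₀, rfl⟩
  subst hP
  obtain ⟨v, hv⟩ := extremePoints_inter_affineSubspace_nonempty
    (ker_eq_bot_of_extremePoints_nonempty hext) ⟨x₀, hx₀S⟩
  rw [← hS] at hv
  exact ⟨v, hface.extremePoints_subset_extremePoints hv, fun y hy => hv.1.2 ▸ hmax y hy⟩
end

section
/- Let ε ∈ ℂ^d, E ∈ ℂ^{d×m}, and ζ = r + is ∈ ℂ with r, s ≠ 0, and suppose ζ² is not an eigenvalue of EᴴE. Then |ζ² − εᴴε − εᴴE(ζ²I − EᴴE)⁻¹Eᴴε| ≥ |Im(ζ²)|·(1 + ‖(ζ²I − EᴴE)⁻¹Eᴴε‖²) = 2|rs|·(1 + ‖(ζ²I − EᴴE)⁻¹Eᴴε‖²). -/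
/-!
Put `v = (ζ²I − EᴴE)⁻¹Eᴴε`. Then `εᴴE(ζ²I − EᴴE)⁻¹Eᴴε = ((ζ²I − EᴴE)v)ᴴv = conj(ζ²)‖v‖² − (EᴴEv)ᴴv`,
and the last term is real because `EᴴE` is Hermitian. Hence the imaginary part of the denominator
is exactly `Im(ζ²)(1 + ‖v‖²)`, and the modulus of a complex number dominates its imaginary part.
-/

open Matrix

namespace Matrix

variable {l n : Type*} [Fintype l] [Fintype n]

lemma star_dotProduct_self_eq_ofReal (v : n → ℂ) :
    star v ⬝ᵥ v = ((∑ i, ‖v i‖ ^ 2 : ℝ) : ℂ) := by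
  simp [dotProduct, Complex.mul_conj', mul_comm]

lemma im_star_dotProduct_self (v : n → ℂ) : (star v ⬝ᵥ v).im = 0 := by
  rw [star_dotProduct_self_eq_ofReal, Complex.ofReal_im]

lemma IsHermitian.im_star_mulVec_dotProduct_self {A : Matrix n n ℂ} (hA : A.IsHermitian)
    (v : n → ℂ) : (star (A *ᵥ v) ⬝ᵥ v).im = 0 := by
  rw [← Complex.conj_eq_iff_im, ← Complex.star_def, ← star_dotProduct, dotProduct_mulVec,
    ← hA.eq, ← star_mulVec, hA.eq]

lemma IsHermitian.im_star_smul_one_sub_mulVec_dotProduct_self [DecidableEq n]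
    {A : Matrix n n ℂ} (hA : A.IsHermitian) (z : ℂ) (v : n → ℂ) :
    (star ((z • 1 - A) *ᵥ v) ⬝ᵥ v).im = -(z.im * ∑ i, ‖v i‖ ^ 2) := by
  rw [sub_mulVec, smul_mulVec, one_mulVec, star_sub, sub_dotProduct, star_smul, smul_dotProduct,
    star_dotProduct_self_eq_ofReal, Complex.sub_im, hA.im_star_mulVec_dotProduct_self, smul_eq_mul,
    Complex.mul_im, Complex.ofReal_re, Complex.ofReal_im, Complex.star_def, Complex.conj_im]
  ring

lemma star_dotProduct_mul_inv_mul_conjTranspose_mulVec {R : Type*} [CommRing R] [StarRing R]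
    [DecidableEq n] (E : Matrix l n R) {B : Matrix n n R} (hB : IsUnit B.det) (ε : l → R) :
    star ε ⬝ᵥ ((E * B⁻¹ * Eᴴ) *ᵥ ε)
      = star (B *ᵥ ((B⁻¹ * Eᴴ) *ᵥ ε)) ⬝ᵥ ((B⁻¹ * Eᴴ) *ᵥ ε) := by
  rw [mulVec_mulVec, ← Matrix.mul_assoc, mul_nonsing_inv B hB, Matrix.one_mul, star_mulVec,
    conjTranspose_conjTranspose, ← dotProduct_mulVec, mulVec_mulVec, Matrix.mul_assoc]

lemma im_sub_star_dotProduct_sub_resolvent [DecidableEq n] (E : Matrix l n ℂ) {z : ℂ}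
    (hz : IsUnit (z • 1 - Eᴴ * E)) (ε : l → ℂ) :
    (z - star ε ⬝ᵥ ε - star ε ⬝ᵥ ((E * (z • 1 - Eᴴ * E)⁻¹ * Eᴴ) *ᵥ ε)).im
      = z.im * (1 + ∑ i, ‖(((z • 1 - Eᴴ * E)⁻¹ * Eᴴ) *ᵥ ε) i‖ ^ 2) := by
  rw [star_dotProduct_mul_inv_mul_conjTranspose_mulVec E ((isUnit_iff_isUnit_det _).mp hz),
    Complex.sub_im, Complex.sub_im, im_star_dotProduct_self,
    (isHermitian_conjTranspose_mul_self E).im_star_smul_one_sub_mulVec_dotProduct_self]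
  ring

end Matrix

lemma Complex.im_sq (z : ℂ) : (z ^ 2).im = 2 * (z.re * z.im) := by
  rw [sq, Complex.mul_im]
  ring

theorem denominator_lower_bound_general {d m : ℕ} (ε : Fin d → ℂ)
    (E : Matrix (Fin d) (Fin m) ℂ) (ζ : ℂ)
    (hspec : ζ ^ 2 ∉ spectrum ℂ (Eᴴ * E)) :
    |(ζ ^ 2).im| *
        (1 + ∑ i, ‖(((ζ ^ 2 • (1 : Matrix (Fin m) (Fin m) ℂ) - Eᴴ * E)⁻¹ * Eᴴ) *ᵥ ε) i‖ ^ 2)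
      ≤ ‖ζ ^ 2 - star ε ⬝ᵥ ε
          - star ε ⬝ᵥ ((E * (ζ ^ 2 • (1 : Matrix (Fin m) (Fin m) ℂ) - Eᴴ * E)⁻¹ * Eᴴ) *ᵥ ε)‖ ∧
    |(ζ ^ 2).im| = 2 * |ζ.re * ζ.im| := by
  have hunit : IsUnit (ζ ^ 2 • (1 : Matrix (Fin m) (Fin m) ℂ) - Eᴴ * E) := by
    rw [← Algebra.algebraMap_eq_smul_one]
    exact spectrum.notMem_iff.mp hspec
  refine ⟨?_, by rw [Complex.im_sq, abs_mul, abs_two]⟩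
  calc _ = |(ζ ^ 2 - star ε ⬝ᵥ ε
          - star ε ⬝ᵥ ((E * (ζ ^ 2 • 1 - Eᴴ * E)⁻¹ * Eᴴ) *ᵥ ε)).im| := by
        rw [im_sub_star_dotProduct_sub_resolvent E hunit, abs_mul]
        exact congrArg _ (abs_of_nonneg (by positivity)).symm
    _ ≤ _ := Complex.abs_im_le_norm _

/-- Lower bound on the denominator
|ζ² − εᴴε − εᴴE(ζ²I − EᴴE)⁻¹Eᴴε| ≥ |Im(ζ²)|(1 + ‖(ζ²I − EᴴE)⁻¹Eᴴε‖²),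
with |Im(ζ²)| = 2|rs|. -/
theorem denominator_lower_bound {d m : ℕ} (ε : Fin d → ℂ)
    (E : Matrix (Fin d) (Fin m) ℂ) (ζ : ℂ) (hr : ζ.re ≠ 0) (hs : ζ.im ≠ 0)
    (hspec : ζ ^ 2 ∉ spectrum ℂ (Eᴴ * E)) :
    |(ζ ^ 2).im| *
        (1 + ∑ i, ‖(((ζ ^ 2 • (1 : Matrix (Fin m) (Fin m) ℂ) - Eᴴ * E)⁻¹ * Eᴴ) *ᵥ ε) i‖ ^ 2)
      ≤ ‖ζ ^ 2 - star ε ⬝ᵥ ε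
          - star ε ⬝ᵥ ((E * (ζ ^ 2 • (1 : Matrix (Fin m) (Fin m) ℂ) - Eᴴ * E)⁻¹ * Eᴴ) *ᵥ ε)‖ ∧
    |(ζ ^ 2).im| = 2 * |ζ.re * ζ.im| :=
  denominator_lower_bound_general ε E ζ hspec
end
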